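/- arXiv:2510.04893 — 5 statements merged into one kernel-verified Lean document; each statement's English description precedes it below -/
import Mathlib

section
/- Let L > 0, d > 0, P > 0 and h_L > 0. For j = 1, 2, let q_j : [0,L] → ℝ be twice continuously differentiable with q_j(0) = 0, let l_j : [0,L] → ℝ be continuously differentiable with l_j(0) = 0, and suppose there is θ_j ∈ ℝ with |θ_j| ≤ 1, θ_j·(l_j(L) + d·q_j(L)) = |l_j(L) + d·q_j(L)|, and q_j'(L) = −h_L·P·θ_j. Set q = q₁ − q₂ and l = l₁ − l₂. Then ∫₀ᴸ (−l'(x))·q'(x) dx + ∫₀ᴸ ((−q''(x) + 2d·l(x) + d²·q(x)) + d·(−l(x)))·(l(x) + d·q(x)) dx ≥ 0. -/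
private lemma sign_mono (a1 a2 t1 t2 : ℝ) (h1 : |t1| ≤ 1) (h2 : |t2| ≤ 1)
    (s1 : t1 * a1 = |a1|) (s2 : t2 * a2 = |a2|) :
    0 ≤ (t1 - t2) * (a1 - a2) := by
  have h12 : t1 * a2 ≤ |a2| := by
    calc t1 * a2 ≤ |t1 * a2| := le_abs_self _
      _ = |t1| * |a2| := abs_mul _ _
      _ ≤ 1 * |a2| := mul_le_mul_of_nonneg_right h1 (abs_nonneg _)
      _ = |a2| := one_mul _
  have h21 : t2 * a1 ≤ |a1| := by
    calc t2 * a1 ≤ |t2 * a1| := le_abs_self _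
      _ = |t2| * |a1| := abs_mul _ _
      _ ≤ 1 * |a1| := mul_le_mul_of_nonneg_right h2 (abs_nonneg _)
      _ = |a1| := one_mul _
  nlinarith [s1, s2]

set_option maxHeartbeats 1000000 in
/-- monotonicity of the Dirichlet–Neumann closed-loop operator
`A(q,l) = (−l, −q'' + 2dl + d²q)` on its domain, with respect to the inner product
`⟨(q₁,l₁),(q₂,l₂)⟩ = ∫ q₁'q₂' + ∫ (l₁ + dq₁)(l₂ + dq₂)`. -/
theorem operator_monotone_dirichlet_neumann
    (L d P hL_ : ℝ) (hL : 0 < L) (hd : 0 < d) (hP : 0 < P) (hh : 0 < hL_)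
    (q1 q2 l1 l2 : ℝ → ℝ)
    (hq1 : ContDiff ℝ 2 q1) (hq2 : ContDiff ℝ 2 q2)
    (hq10 : q1 0 = 0) (hq20 : q2 0 = 0)
    (hl1 : ContDiff ℝ 1 l1) (hl2 : ContDiff ℝ 1 l2)
    (hl10 : l1 0 = 0) (hl20 : l2 0 = 0)
    (θ1 θ2 : ℝ) (hθ1 : |θ1| ≤ 1) (hθ2 : |θ2| ≤ 1)
    (hsel1 : θ1 * (l1 L + d * q1 L) = |l1 L + d * q1 L|)
    (hsel2 : θ2 * (l2 L + d * q2 L) = |l2 L + d * q2 L|)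
    (hbc1 : deriv q1 L = -(hL_ * P) * θ1)
    (hbc2 : deriv q2 L = -(hL_ * P) * θ2) :
    0 ≤ (∫ x in (0:ℝ)..L,
            (-(deriv (fun y => l1 y - l2 y) x)) * deriv (fun y => q1 y - q2 y) x)
      + (∫ x in (0:ℝ)..L,
            ((-(deriv (deriv (fun y => q1 y - q2 y)) x)
                + 2 * d * (l1 x - l2 x) + d^2 * (q1 x - q2 x))
              + d * (-(l1 x - l2 x)))
            * ((l1 x - l2 x) + d * (q1 x - q2 x))) := by
  set q : ℝ → ℝ := fun y => q1 y - q2 y with hqdef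
  set l : ℝ → ℝ := fun y => l1 y - l2 y with hldef
  have hq : ContDiff ℝ 2 q := hq1.sub hq2
  have hl : ContDiff ℝ 1 l := hl1.sub hl2
  have hq' : ContDiff ℝ 1 (deriv q) := by
    have h2 : ContDiff ℝ (1 + 1) q := by rw [one_add_one_eq_two]; exact hq
    exact (contDiff_succ_iff_deriv.mp h2).2.2
  have hcq' : Continuous (deriv q) := hq'.continuous
  have hcq'' : Continuous (deriv (deriv q)) := hq'.continuous_deriv le_rfl
  have hcl' : Continuous (deriv l) := hl.continuous_deriv le_rfl
  have hdq : ∀ x, HasDerivAt q (deriv q x) x :=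
    fun x => (hq.differentiable two_ne_zero x).hasDerivAt
  have hdq' : ∀ x, HasDerivAt (deriv q) (deriv (deriv q) x) x :=
    fun x => (hq'.differentiable one_ne_zero x).hasDerivAt
  have hdl : ∀ x, HasDerivAt l (deriv l x) x :=
    fun x => (hl.differentiable one_ne_zero x).hasDerivAt
  set F : ℝ → ℝ := fun x => (l x + d * q x) * deriv q x with hFdef
  set F' : ℝ → ℝ := fun x =>
    (deriv l x + d * deriv q x) * deriv q x + (l x + d * q x) * deriv (deriv q) x with hF'def
  have hF : ∀ x, HasDerivAt F (F' x) x := fun x =>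
    (((hdl x).add ((hdq x).const_mul d)).mul (hdq' x))
  have hcF' : Continuous F' := by
    apply Continuous.add
    · exact (hcl'.add (continuous_const.mul hcq')).mul hcq'
    · exact ((hl.continuous.add (continuous_const.mul hq.continuous))).mul hcq''
  -- pointwise identity for the second integrand combined with the first
  have key : ∀ x, (-(deriv l x)) * deriv q x
      + ((-(deriv (deriv q) x) + 2 * d * (l1 x - l2 x) + d^2 * (q1 x - q2 x))
          + d * (-(l1 x - l2 x))) * ((l1 x - l2 x) + d * (q1 x - q2 x))
      = d * ((l x + d * q x)^2 + (deriv q x)^2) - F' x := by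
    intro x
    simp only [hqdef, hldef, hF'def]
    ring
  have hint1 : IntervalIntegrable (fun x => (-(deriv l x)) * deriv q x)
      MeasureTheory.volume 0 L := ((hcl'.neg).mul hcq').intervalIntegrable _ _
  have hint2 : IntervalIntegrable (fun x =>
      ((-(deriv (deriv q) x) + 2 * d * (l1 x - l2 x) + d^2 * (q1 x - q2 x))
        + d * (-(l1 x - l2 x))) * ((l1 x - l2 x) + d * (q1 x - q2 x)))
      MeasureTheory.volume 0 L := by
    apply Continuous.intervalIntegrable
    exact (((hcq''.neg.add (continuous_const.mul (hl1.continuous.sub hl2.continuous))).add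
        (continuous_const.mul (hq1.continuous.sub hq2.continuous))).add
        (continuous_const.mul ((hl1.continuous.sub hl2.continuous).neg))).mul
        ((hl1.continuous.sub hl2.continuous).add
          (continuous_const.mul (hq1.continuous.sub hq2.continuous)))
  have hintG : IntervalIntegrable (fun x => d * ((l x + d * q x)^2 + (deriv q x)^2))
      MeasureTheory.volume 0 L := by
    apply Continuous.intervalIntegrable
    exact continuous_const.mul
      (((hl.continuous.add (continuous_const.mul hq.continuous)).pow 2).add (hcq'.pow 2))
  have hintF' : IntervalIntegrable F' MeasureTheory.volume 0 L := hcF'.intervalIntegrable _ _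
  have hsum : (∫ x in (0:ℝ)..L, (-(deriv l x)) * deriv q x)
      + (∫ x in (0:ℝ)..L,
          ((-(deriv (deriv q) x) + 2 * d * (l1 x - l2 x) + d^2 * (q1 x - q2 x))
            + d * (-(l1 x - l2 x))) * ((l1 x - l2 x) + d * (q1 x - q2 x)))
      = (∫ x in (0:ℝ)..L, d * ((l x + d * q x)^2 + (deriv q x)^2)) - (F L - F 0) := by
    rw [← intervalIntegral.integral_add hint1 hint2]
    rw [← intervalIntegral.integral_eq_sub_of_hasDerivAt (fun x _ => hF x) hintF']
    rw [← intervalIntegral.integral_sub hintG hintF']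
    exact intervalIntegral.integral_congr (fun x _ => key x)
  have hF0 : F 0 = 0 := by
    simp [hFdef, hldef, hqdef, hq10, hq20, hl10, hl20]
  have hderivL : deriv q L = -(hL_ * P) * θ1 - -(hL_ * P) * θ2 := by
    rw [hqdef]
    rw [deriv_fun_sub (hq1.differentiable two_ne_zero L) (hq2.differentiable two_ne_zero L)]
    rw [hbc1, hbc2]
  have hFL : F L ≤ 0 := by
    have hmono : 0 ≤ (θ1 - θ2) * ((l1 L + d * q1 L) - (l2 L + d * q2 L)) :=
      sign_mono _ _ _ _ hθ1 hθ2 hsel1 hsel2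
    have : F L = -(hL_ * P) * ((θ1 - θ2) * ((l1 L + d * q1 L) - (l2 L + d * q2 L))) := by
      simp only [hFdef]
      rw [hderivL]
      simp only [hldef, hqdef]
      ring
    rw [this]
    have : 0 < hL_ * P := mul_pos hh hP
    nlinarith
  have hnn : 0 ≤ ∫ x in (0:ℝ)..L, d * ((l x + d * q x)^2 + (deriv q x)^2) := by
    apply intervalIntegral.integral_nonneg hL.le
    intro x _
    positivity
  rw [hsum]
  linarith
end

section
/- Let L > 0, d > 0, P > 0, h_L > 0 and σ > 0. Let m : [0,L] → ℝ be continuously differentiable with m(0) = 0 and let n : [0,L] → ℝ be continuous. Then there exists a twice continuously differentiable function q : [0,L] → ℝ such that −q''(x) + (1 + 2d + d²)·q(x) = n(x) + (1 + 2d)·m(x) for all x ∈ [0,L], q(0) = 0, and q'(L) = −h_L·P·α_σ((1 + d)·q(L) − m(L)). -/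
/-- The Yosida approximation `α_σ` of the multivalued sign operator:
`α_σ(x) = x/σ` if `|x| ≤ σ` and `α_σ(x) = x/|x|` otherwise. -/
noncomputable def yosidaSign (σ x : ℝ) : ℝ := if |x| ≤ σ then x / σ else x / |x|

lemma yosidaSign_eq_clamp {σ : ℝ} (hσ : 0 < σ) (x : ℝ) :
    yosidaSign σ x = max (-1) (min 1 (x / σ)) := by
  unfold yosidaSign
  rcases le_or_gt (|x|) σ with h | h
  · rw [if_pos h]
    rw [abs_le] at h
    have h1 : x / σ ≤ 1 := by rw [div_le_one hσ]; exact h.2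
    have h2 : -1 ≤ x / σ := by
      rw [le_div_iff₀ hσ]; nlinarith [h.1]
    rw [min_eq_right h1, max_eq_right h2]
  · rw [if_neg (not_le.mpr h)]
    rcases le_or_gt 0 x with hx | hx
    · have hx0 : 0 < x := by
        rcases hx.lt_or_eq with h' | h'
        · exact h'
        · exfalso; rw [← h', abs_zero] at h; linarith
      rw [abs_of_pos hx0, div_self hx0.ne']
      have h1 : (1:ℝ) ≤ x / σ := by
        rw [le_div_iff₀ hσ]; rw [abs_of_pos hx0] at h; linarith
      rw [min_eq_left h1, max_eq_right (by norm_num : (-1:ℝ) ≤ 1)]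
    · rw [abs_of_neg hx]
      have hxσ : x < -σ := by rw [abs_of_neg hx] at h; linarith
      have h1 : x / σ ≤ -1 := by rw [div_le_iff₀ hσ]; linarith
      have hxx : x / -x = -1 := by
        rw [div_neg, div_self hx.ne]
      rw [hxx, min_eq_right (by linarith : x / σ ≤ 1), max_eq_left h1]

lemma yosidaSign_continuous {σ : ℝ} (hσ : 0 < σ) : Continuous (yosidaSign σ) := by
  have h : yosidaSign σ = fun x => max (-1) (min 1 (x / σ)) := funext (yosidaSign_eq_clamp hσ)
  rw [h]
  exact continuous_const.max ((continuous_const.min (continuous_id.div_const σ)))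

lemma yosidaSign_abs_le {σ : ℝ} (hσ : 0 < σ) (x : ℝ) : |yosidaSign σ x| ≤ 1 := by
  rw [yosidaSign_eq_clamp hσ, abs_le]
  exact ⟨le_max_left _ _, max_le (by norm_num) (min_le_left _ _)⟩

/-- solvability of the Yosida-regularized resolvent boundary value
problem in the Dirichlet–Neumann case. -/
theorem regularized_resolvent_dirichlet_neumann
    (L d P hL_ σ : ℝ) (hL : 0 < L) (hd : 0 < d) (hP : 0 < P) (hh : 0 < hL_)
    (hσ : 0 < σ)
    (m n : ℝ → ℝ) (hm : ContDiff ℝ 1 m) (hm0 : m 0 = 0) (hn : Continuous n) :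
    ∃ q : ℝ → ℝ, ContDiff ℝ 2 q
      ∧ (∀ x ∈ Set.Icc (0:ℝ) L,
          -(deriv (deriv q) x) + (1 + 2 * d + d^2) * q x
            = n x + (1 + 2 * d) * m x)
      ∧ q 0 = 0
      ∧ deriv q L = -(hL_ * P) * yosidaSign σ ((1 + d) * q L - m L) := by
  set k : ℝ := 1 + d with hk
  have hk0 : 0 < k := by positivity
  set g : ℝ → ℝ := fun x => -(n x + (1 + 2 * d) * m x) with hgdef
  have hgc : Continuous g := (hn.add (continuous_const.mul hm.continuous)).neg
  set C : ℝ → ℝ := fun x => ∫ s in (0:ℝ)..x, Real.cosh (k * s) * g s with hCdef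
  set S : ℝ → ℝ := fun x => ∫ s in (0:ℝ)..x, Real.sinh (k * s) * g s with hSdef
  have hcoshc : Continuous fun s => Real.cosh (k * s) * g s :=
    (Real.continuous_cosh.comp (continuous_const.mul continuous_id)).mul hgc
  have hsinhc : Continuous fun s => Real.sinh (k * s) * g s :=
    (Real.continuous_sinh.comp (continuous_const.mul continuous_id)).mul hgc
  have hC : ∀ x, HasDerivAt C (Real.cosh (k * x) * g x) x := fun x =>
    (hcoshc.integral_hasStrictDerivAt 0 x).hasDerivAt
  have hS : ∀ x, HasDerivAt S (Real.sinh (k * x) * g x) x := fun x =>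
    (hsinhc.integral_hasStrictDerivAt 0 x).hasDerivAt
  have hsinh : ∀ x : ℝ, HasDerivAt (fun x => Real.sinh (k * x)) (Real.cosh (k * x) * k) x := by
    intro x
    simpa using ((hasDerivAt_id x).const_mul k).sinh
  have hcosh : ∀ x : ℝ, HasDerivAt (fun x => Real.cosh (k * x)) (Real.sinh (k * x) * k) x := by
    intro x
    simpa using ((hasDerivAt_id x).const_mul k).cosh
  -- the family of candidate solutions and its derivatives
  set Q : ℝ → ℝ → ℝ := fun A x =>
    A * Real.sinh (k * x) + (Real.sinh (k * x) * C x - Real.cosh (k * x) * S x) / k with hQdef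
  set Q1 : ℝ → ℝ → ℝ := fun A x =>
    A * k * Real.cosh (k * x) + (Real.cosh (k * x) * C x - Real.sinh (k * x) * S x) with hQ1def
  have hQ1' : ∀ A x, HasDerivAt (Q A) (Q1 A x) x := by
    intro A x
    have h1 : HasDerivAt (fun x => A * Real.sinh (k * x)) (A * (Real.cosh (k * x) * k)) x :=
      (hsinh x).const_mul A
    have h2 : HasDerivAt (fun x => Real.sinh (k * x) * C x)
        (Real.cosh (k * x) * k * C x + Real.sinh (k * x) * (Real.cosh (k * x) * g x)) x :=
      (hsinh x).mul (hC x)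
    have h3 : HasDerivAt (fun x => Real.cosh (k * x) * S x)
        (Real.sinh (k * x) * k * S x + Real.cosh (k * x) * (Real.sinh (k * x) * g x)) x :=
      (hcosh x).mul (hS x)
    have h := h1.add ((h2.sub h3).div_const k)
    refine h.congr_deriv ?_
    symm
    field_simp
    ring
  have hQ2' : ∀ A x, HasDerivAt (Q1 A) (k ^ 2 * Q A x + g x) x := by
    intro A x
    have h1 : HasDerivAt (fun x => A * k * Real.cosh (k * x))
        (A * k * (Real.sinh (k * x) * k)) x := (hcosh x).const_mul (A * k)
    have h2 : HasDerivAt (fun x => Real.cosh (k * x) * C x)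
        (Real.sinh (k * x) * k * C x + Real.cosh (k * x) * (Real.cosh (k * x) * g x)) x :=
      (hcosh x).mul (hC x)
    have h3 : HasDerivAt (fun x => Real.sinh (k * x) * S x)
        (Real.cosh (k * x) * k * S x + Real.sinh (k * x) * (Real.sinh (k * x) * g x)) x :=
      (hsinh x).mul (hS x)
    have h := h1.add (h2.sub h3)
    refine h.congr_deriv ?_
    symm
    have hid : Real.cosh (k * x) ^ 2 - Real.sinh (k * x) ^ 2 = 1 := Real.cosh_sq_sub_sinh_sq _
    simp only [hQdef]
    have hk' : k ≠ 0 := hk0.ne'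
    field_simp
    linear_combination (-(g x)) * hid
  -- finding the right parameter by the intermediate value theorem
  have hcoshL : (0:ℝ) < Real.cosh (k * L) := Real.cosh_pos _
  have hkc : 0 < k * Real.cosh (k * L) := mul_pos hk0 hcoshL
  set c1 : ℝ := Real.cosh (k * L) * C L - Real.sinh (k * L) * S L with hc1def
  set F : ℝ → ℝ :=
    fun A => Q1 A L + (hL_ * P) * yosidaSign σ ((1 + d) * Q A L - m L) with hFdef
  have hQ1L : ∀ A, Q1 A L = A * (k * Real.cosh (k * L)) + c1 := by
    intro A; simp only [hQ1def, hc1def]; ring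
  have hFcont : Continuous F := by
    have h1 : Continuous fun A : ℝ => Q A L := by
      simp only [hQdef]
      exact (continuous_id.mul continuous_const).add continuous_const
    have h2 : Continuous fun A : ℝ => Q1 A L := by
      simp only [hQ1def]
      exact ((continuous_id.mul continuous_const).mul continuous_const).add continuous_const
    simp only [hFdef]
    exact h2.add (continuous_const.mul ((yosidaSign_continuous hσ).comp
      ((continuous_const.mul h1).sub continuous_const)))
  set Ap : ℝ := (|c1| + hL_ * P + 1) / (k * Real.cosh (k * L)) with hApdef
  have hAp0 : 0 < Ap := by
    apply div_pos _ hkc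
    positivity
  have hApval : Ap * (k * Real.cosh (k * L)) = |c1| + hL_ * P + 1 := by
    rw [hApdef]; field_simp
  have hhP : 0 < hL_ * P := mul_pos hh hP
  have hψ : ∀ A : ℝ, |yosidaSign σ ((1 + d) * Q A L - m L)| ≤ 1 := fun A =>
    yosidaSign_abs_le hσ _
  have hFpos : 0 ≤ F Ap := by
    simp only [hFdef]
    rw [hQ1L Ap, hApval]
    have h := abs_le.mp (hψ Ap)
    nlinarith [neg_abs_le c1, h.1]
  have hFneg : F (-Ap) ≤ 0 := by
    simp only [hFdef]
    rw [hQ1L (-Ap)]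
    have h : (-Ap) * (k * Real.cosh (k * L)) = -(|c1| + hL_ * P + 1) := by
      rw [neg_mul, hApval]
    rw [h]
    have h2 := abs_le.mp (hψ (-Ap))
    nlinarith [le_abs_self c1, h2.2]
  have hmem : (0:ℝ) ∈ Set.Icc (F (-Ap)) (F Ap) := ⟨hFneg, hFpos⟩
  obtain ⟨A, _, hFA⟩ :=
    intermediate_value_Icc (by linarith : -Ap ≤ Ap)
      (hFcont.continuousOn (s := Set.Icc (-Ap) Ap)) hmem
  refine ⟨Q A, ?_, ?_, ?_, ?_⟩
  · -- smoothness
    have hd1 : deriv (Q A) = Q1 A := funext fun x => (hQ1' A x).deriv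
    have hd2 : deriv (Q1 A) = fun x => k ^ 2 * Q A x + g x :=
      funext fun x => (hQ2' A x).deriv
    have hQcont : Continuous (Q A) :=
      Differentiable.continuous (fun x => (hQ1' A x).differentiableAt)
    rw [show (2 : WithTop ℕ∞) = 1 + 1 by rfl, contDiff_succ_iff_deriv]
    refine ⟨fun x => (hQ1' A x).differentiableAt, by simp, ?_⟩
    rw [hd1, contDiff_one_iff_deriv]
    refine ⟨fun x => (hQ2' A x).differentiableAt, ?_⟩
    rw [hd2]
    exact (continuous_const.mul hQcont).add hgc
  · -- the differential equation
    intro x hx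
    have hd1 : deriv (Q A) = Q1 A := funext fun x => (hQ1' A x).deriv
    rw [hd1, (hQ2' A x).deriv]
    have hkk : (1 + 2 * d + d ^ 2) = k ^ 2 := by rw [hk]; ring
    rw [hkk, hgdef]
    ring
  · -- Dirichlet condition at 0
    simp only [hQdef, hCdef, hSdef, mul_zero, Real.sinh_zero, Real.cosh_zero,
      intervalIntegral.integral_same]
    ring
  · -- regularized Neumann condition at L
    rw [(hQ1' A L).deriv]
    simp only [hFdef] at hFA
    linarith
end

section
/- Let d > 0. There exists a constant C₁ > 0, depending only on d, with the following property: for every L > 0, every σ > 0, every P > 0, every h_L > 0, every continuously differentiable m : [0,L] → ℝ with m(0) = 0, every continuous n : [0,L] → ℝ, and every twice continuously differentiable q : [0,L] → ℝ satisfying −q''(x) + (1 + 2d + d²)·q(x) = n(x) + (1 + 2d)·m(x) on [0,L], q(0) = 0, and q'(L) = −h_L·P·α_σ((1 + d)·q(L) − m(L)), one has (∫₀ᴸ (q² + q'² + q''²) dx)^{1/2} ≤ C₁·(∫₀ᴸ (m² + m'²) dx)^{1/2} + C₁·(∫₀ᴸ n² dx)^{1/2}. -/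
lemma yosidaSign_mul_nonneg (σ x : ℝ) (hσ : 0 < σ) : 0 ≤ yosidaSign σ x * x := by
  unfold yosidaSign
  split_ifs with h
  · rw [show x / σ * x = x^2 / σ by ring]; positivity
  · rcases eq_or_ne x 0 with rfl | hx
    · simp
    · have hax : 0 < |x| := abs_pos.mpr hx
      rw [show x / |x| * x = x^2 / |x| by ring]; positivity

lemma sqrt_add_le' (x y : ℝ) (hx : 0 ≤ x) (hy : 0 ≤ y) :
    Real.sqrt (x + y) ≤ Real.sqrt x + Real.sqrt y := by
  rw [show Real.sqrt x + Real.sqrt y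
      = Real.sqrt ((Real.sqrt x + Real.sqrt y)^2) from (Real.sqrt_sq (by positivity)).symm]
  apply Real.sqrt_le_sqrt
  nlinarith [Real.sq_sqrt hx, Real.sq_sqrt hy, Real.sqrt_nonneg x, Real.sqrt_nonneg y]

set_option maxHeartbeats 1000000 in
/-- uniform-in-σ H² estimate, with constant depending only on `d`,
for solutions of the Yosida-regularized resolvent boundary value problem in the
Dirichlet–Neumann case. -/
theorem uniform_H2_bound_dirichlet_neumann
    (d : ℝ) (hd : 0 < d) :
    ∃ C₁ : ℝ, 0 < C₁ ∧
      ∀ L σ P hL_ : ℝ, 0 < L → 0 < σ → 0 < P → 0 < hL_ →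
      ∀ m n q : ℝ → ℝ,
        ContDiff ℝ 1 m → m 0 = 0 → Continuous n → ContDiff ℝ 2 q →
        (∀ x ∈ Set.Icc (0:ℝ) L,
          -(deriv (deriv q) x) + (1 + 2 * d + d^2) * q x
            = n x + (1 + 2 * d) * m x) →
        q 0 = 0 →
        deriv q L = -(hL_ * P) * yosidaSign σ ((1 + d) * q L - m L) →
        Real.sqrt (∫ x in (0:ℝ)..L,
            ((q x)^2 + (deriv q x)^2 + (deriv (deriv q) x)^2))
          ≤ C₁ * Real.sqrt (∫ x in (0:ℝ)..L, ((m x)^2 + (deriv m x)^2))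
            + C₁ * Real.sqrt (∫ x in (0:ℝ)..L, (n x)^2) := by
  obtain ⟨a, ha_def⟩ : ∃ a : ℝ, a = 1 + d := ⟨_, rfl⟩
  have ha1 : 1 < a := by rw [ha_def]; linarith
  have ha0 : 0 < a := by linarith
  obtain ⟨K, hK_def⟩ : ∃ K : ℝ, K = 100 * a^6 := ⟨_, rfl⟩
  have hK : 0 < K := by rw [hK_def]; positivity
  refine ⟨Real.sqrt K, Real.sqrt_pos.mpr hK, ?_⟩
  intro L σ P hL_ hL hσ hP hhL m n q hm hm0 hn hq hode hq0 hqL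
  rw [← ha_def] at hqL
  -- smoothness facts
  have hq11 : ContDiff ℝ (1+1 : WithTop ℕ∞) q := by norm_num; exact hq
  have hq1 : ContDiff ℝ 1 (deriv q) := (contDiff_succ_iff_deriv.mp hq11).2.2
  have hqd : Differentiable ℝ q := hq.differentiable (by norm_num)
  have hqd' : Differentiable ℝ (deriv q) := hq1.differentiable (by norm_num)
  have hcq : Continuous q := hq.continuous
  have hcq' : Continuous (deriv q) := hq1.continuous
  have hcq'' : Continuous (deriv (deriv q)) := hq1.continuous_deriv le_rfl
  have hmd : Differentiable ℝ m := hm.differentiable (by norm_num)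
  have hcm : Continuous m := hm.continuous
  have hcm' : Continuous (deriv m) := hm.continuous_deriv le_rfl
  -- auxiliary function w
  obtain ⟨w, hw_def⟩ : ∃ w : ℝ → ℝ, w = fun x => a * q x - m x := ⟨_, rfl⟩
  have hwx : ∀ x, w x = a * q x - m x := fun x => by rw [hw_def]
  have hcw : Continuous w := by rw [hw_def]; exact (continuous_const.mul hcq).sub hcm
  have hcw' : Continuous (fun x => a * deriv q x - deriv m x) :=
    (continuous_const.mul hcq').sub hcm'
  have hw0 : w 0 = 0 := by rw [hwx, hq0, hm0]; ring
  -- integrability helper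
  have hint : ∀ f : ℝ → ℝ, Continuous f → IntervalIntegrable f MeasureTheory.volume 0 L :=
    fun f hf => hf.intervalIntegrable 0 L
  -- integration by parts
  have hibp :
      ∫ x in (0:ℝ)..L, (deriv (deriv q) x * w x + deriv q x * (a * deriv q x - deriv m x))
        = deriv q L * w L - deriv q 0 * w 0 := by
    apply intervalIntegral.integral_deriv_mul_eq_sub
    · exact fun x _ => (hqd' x).hasDerivAt
    · intro x _
      rw [hw_def]
      exact ((hqd x).hasDerivAt.const_mul a).sub (hmd x).hasDerivAt
    · exact hint _ hcq''
    · exact hint _ hcw'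
  -- boundary sign
  have hbd : deriv q L * w L ≤ 0 := by
    have h0 := yosidaSign_mul_nonneg σ (a * q L - m L) hσ
    have h1 : (0:ℝ) ≤ (hL_ * P) * (yosidaSign σ (a * q L - m L) * (a * q L - m L)) :=
      mul_nonneg (mul_pos hhL hP).le h0
    rw [hqL, hwx]
    nlinarith [h1]
  -- base integrals
  obtain ⟨Q0, hQ0_def⟩ : ∃ r : ℝ, r = ∫ x in (0:ℝ)..L, (q x)^2 := ⟨_, rfl⟩
  obtain ⟨Q1, hQ1_def⟩ : ∃ r : ℝ, r = ∫ x in (0:ℝ)..L, (deriv q x)^2 := ⟨_, rfl⟩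
  obtain ⟨Q2, hQ2_def⟩ : ∃ r : ℝ, r = ∫ x in (0:ℝ)..L, (deriv (deriv q) x)^2 := ⟨_, rfl⟩
  obtain ⟨M0, hM0_def⟩ : ∃ r : ℝ, r = ∫ x in (0:ℝ)..L, (m x)^2 := ⟨_, rfl⟩
  obtain ⟨M1, hM1_def⟩ : ∃ r : ℝ, r = ∫ x in (0:ℝ)..L, (deriv m x)^2 := ⟨_, rfl⟩
  obtain ⟨N0, hN0_def⟩ : ∃ r : ℝ, r = ∫ x in (0:ℝ)..L, (n x)^2 := ⟨_, rfl⟩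
  obtain ⟨W2, hW2_def⟩ : ∃ r : ℝ, r = ∫ x in (0:ℝ)..L, (w x)^2 := ⟨_, rfl⟩
  have hQ0 : 0 ≤ Q0 := by
    rw [hQ0_def]; exact intervalIntegral.integral_nonneg hL.le (fun x _ => by positivity)
  have hQ1 : 0 ≤ Q1 := by
    rw [hQ1_def]; exact intervalIntegral.integral_nonneg hL.le (fun x _ => by positivity)
  have hQ2 : 0 ≤ Q2 := by
    rw [hQ2_def]; exact intervalIntegral.integral_nonneg hL.le (fun x _ => by positivity)
  have hM0 : 0 ≤ M0 := by
    rw [hM0_def]; exact intervalIntegral.integral_nonneg hL.le (fun x _ => by positivity)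
  have hM1 : 0 ≤ M1 := by
    rw [hM1_def]; exact intervalIntegral.integral_nonneg hL.le (fun x _ => by positivity)
  have hN0 : 0 ≤ N0 := by
    rw [hN0_def]; exact intervalIntegral.integral_nonneg hL.le (fun x _ => by positivity)
  have hW2 : 0 ≤ W2 := by
    rw [hW2_def]; exact intervalIntegral.integral_nonneg hL.le (fun x _ => by positivity)
  -- Step 1 : energy estimate
  have F1 : (a^2/2) * Q1 + (a^2/2) * W2 ≤ (1/2) * M1 + N0 + d^2 * M0 := by
    have hmono :
        (∫ x in (0:ℝ)..L,
          ((a^2/2) * (deriv q x)^2 + (a^2/2) * (w x)^2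
            - ((1/2) * (deriv m x)^2 + (n x)^2 + d^2 * (m x)^2)))
        ≤ ∫ x in (0:ℝ)..L,
            a * (deriv (deriv q) x * w x + deriv q x * (a * deriv q x - deriv m x)) := by
      apply intervalIntegral.integral_mono_on hL.le
      · apply hint; fun_prop
      · apply hint; fun_prop
      · intro x hx
        have h1 := hode x hx
        have hqq : deriv (deriv q) x = a * w x - n x - d * m x := by
          rw [hwx, ha_def]; linarith [h1]
        rw [hqq]
        have e1 := sq_nonneg (a * w x - (n x + d * m x))
        have e2 := sq_nonneg (a * deriv q x - deriv m x)
        have e3 := sq_nonneg (n x - d * m x)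
        linarith [e1, e2, e3]
    have hsplit1 :
        (∫ x in (0:ℝ)..L,
          ((a^2/2) * (deriv q x)^2 + (a^2/2) * (w x)^2
            - ((1/2) * (deriv m x)^2 + (n x)^2 + d^2 * (m x)^2)))
        = (a^2/2) * Q1 + (a^2/2) * W2 - ((1/2) * M1 + N0 + d^2 * M0) := by
      rw [intervalIntegral.integral_sub (by apply hint; fun_prop) (by apply hint; fun_prop),
        intervalIntegral.integral_add (by apply hint; fun_prop) (by apply hint; fun_prop),
        intervalIntegral.integral_add (by apply hint; fun_prop) (by apply hint; fun_prop),
        intervalIntegral.integral_add (by apply hint; fun_prop) (by apply hint; fun_prop),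
        intervalIntegral.integral_const_mul, intervalIntegral.integral_const_mul,
        intervalIntegral.integral_const_mul, intervalIntegral.integral_const_mul,
        hQ1_def, hW2_def, hM1_def, hN0_def, hM0_def]
    have hsplit2 :
        (∫ x in (0:ℝ)..L,
          a * (deriv (deriv q) x * w x + deriv q x * (a * deriv q x - deriv m x)))
        = a * (deriv q L * w L) := by
      rw [intervalIntegral.integral_const_mul, hibp, hw0]; ring
    rw [hsplit1, hsplit2] at hmono
    have h2 : a * (deriv q L * w L) ≤ 0 := mul_nonpos_of_nonneg_of_nonpos ha0.le hbd
    linarith [hmono, h2]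
  -- Step 2 : L² bound on q
  have F2 : a^2 * Q0 ≤ 2 * W2 + 2 * M0 := by
    have hmono :
        (∫ x in (0:ℝ)..L, a^2 * (q x)^2)
          ≤ ∫ x in (0:ℝ)..L, (2 * (w x)^2 + 2 * (m x)^2) := by
      apply intervalIntegral.integral_mono_on hL.le
      · apply hint; fun_prop
      · apply hint; fun_prop
      · intro x _
        have h2 : (a * q x)^2 = (w x + m x)^2 := by rw [hwx]; ring_nf
        have e1 := sq_nonneg (w x - m x)
        nlinarith [h2, e1]
    rwa [intervalIntegral.integral_const_mul,
      intervalIntegral.integral_add (by apply hint; fun_prop) (by apply hint; fun_prop),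
      intervalIntegral.integral_const_mul, intervalIntegral.integral_const_mul,
      hQ0_def.symm, hW2_def.symm, hM0_def.symm] at hmono
  -- Step 3 : bound on q''
  have F3 : Q2 ≤ 3 * (1 + 2*d + d^2)^2 * Q0 + 3 * N0 + 3 * (1 + 2*d)^2 * M0 := by
    have hmono :
        (∫ x in (0:ℝ)..L, (deriv (deriv q) x)^2)
          ≤ ∫ x in (0:ℝ)..L,
            (3 * (1 + 2*d + d^2)^2 * (q x)^2 + 3 * (n x)^2 + 3 * (1 + 2*d)^2 * (m x)^2) := by
      apply intervalIntegral.integral_mono_on hL.le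
      · apply hint; fun_prop
      · apply hint; fun_prop
      · intro x hx
        have h1 := hode x hx
        have hqq : deriv (deriv q) x = (1 + 2*d + d^2) * q x - n x - (1 + 2*d) * m x := by
          linarith
        rw [hqq]
        have e1 := sq_nonneg ((1 + 2*d + d^2) * q x + n x)
        have e2 := sq_nonneg (n x - (1 + 2*d) * m x)
        have e3 := sq_nonneg ((1 + 2*d + d^2) * q x + (1 + 2*d) * m x)
        linarith [e1, e2, e3]
    rwa [intervalIntegral.integral_add (by apply hint; fun_prop) (by apply hint; fun_prop),
      intervalIntegral.integral_add (by apply hint; fun_prop) (by apply hint; fun_prop),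
      intervalIntegral.integral_const_mul, intervalIntegral.integral_const_mul,
      intervalIntegral.integral_const_mul,
      hQ2_def.symm, hQ0_def.symm, hN0_def.symm, hM0_def.symm] at hmono
  -- combine into the final scalar bound
  have hA : (1:ℝ) ≤ a^2 := one_le_pow₀ ha1.le
  obtain ⟨T, hT_def⟩ : ∃ T : ℝ, T = (M0 + M1) + N0 := ⟨_, rfl⟩
  have hT : 0 ≤ T := by rw [hT_def]; linarith
  have hM0T : M0 ≤ T := by rw [hT_def]; linarith
  have hM1T : M1 ≤ T := by rw [hT_def]; linarith
  have hN0T : N0 ≤ T := by rw [hT_def]; linarith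
  have hTa : T ≤ a^2 * T := le_mul_of_one_le_left hT hA
  have hM0a : a^2 * M0 ≤ a^2 * T := mul_le_mul_of_nonneg_left hM0T (by positivity)
  have hd2 : d^2 ≤ a^2 := pow_le_pow_left₀ hd.le (by rw [ha_def]; linarith) 2
  have hd2M0 : d^2 * M0 ≤ a^2 * M0 := mul_le_mul_of_nonneg_right hd2 hM0
  have hQ1T : Q1 ≤ 5 * (a^2 * T) := by
    have h1 : Q1 ≤ a^2 * Q1 := le_mul_of_one_le_left hQ1 hA
    have h9 : (0:ℝ) ≤ a^2 * W2 := by positivity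
    linarith [F1, h1, h9, hd2M0, hM0a, hM1T.trans hTa, hN0T.trans hTa]
  have hW2T : W2 ≤ 5 * (a^2 * T) := by
    have h1 : W2 ≤ a^2 * W2 := le_mul_of_one_le_left hW2 hA
    have h9 : (0:ℝ) ≤ a^2 * Q1 := by positivity
    linarith [F1, h1, h9, hd2M0, hM0a, hM1T.trans hTa, hN0T.trans hTa]
  have hQ0T : Q0 ≤ 12 * (a^2 * T) := by
    have h1 : Q0 ≤ a^2 * Q0 := le_mul_of_one_le_left hQ0 hA
    linarith [F2, h1, hW2T, hM0T.trans hTa]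
  have haa : (1 + 2*d + d^2) = a^2 := by rw [ha_def]; ring
  have hA6 : a^2 ≤ a^6 := pow_le_pow_right₀ ha1.le (by norm_num)
  have hTa6 : a^2 * T ≤ a^6 * T := mul_le_mul_of_nonneg_right hA6 hT
  have hQ2T : Q2 ≤ 51 * (a^6 * T) := by
    rw [haa] at F3
    have g1 : 3 * (a^2)^2 * Q0 ≤ 3 * (a^2)^2 * (12 * (a^2 * T)) :=
      mul_le_mul_of_nonneg_left hQ0T (by positivity)
    have g2 : (1 + 2*d)^2 ≤ 4 * a^2 := by
      have := pow_le_pow_left₀ (by linarith : (0:ℝ) ≤ 1 + 2*d)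
        (by rw [ha_def]; linarith : 1 + 2*d ≤ 2*a) 2
      calc (1 + 2*d)^2 ≤ (2*a)^2 := this
        _ = 4 * a^2 := by ring
    have g3 : (1 + 2*d)^2 * M0 ≤ (4 * a^2) * M0 := mul_le_mul_of_nonneg_right g2 hM0
    have g5 : N0 ≤ a^6 * T := (hN0T.trans hTa).trans hTa6
    linarith [F3, g1, g3, hM0a, g5, hTa6]
  have hS : Q0 + Q1 + Q2 ≤ K * T := by
    rw [hK_def]
    have h6 : (0:ℝ) ≤ a^6 * T := mul_nonneg (by positivity) hT
    linarith [hQ0T, hQ1T, hQ2T, hTa6, h6]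
  -- rewrite goal integrals
  have hgoal1 :
      (∫ x in (0:ℝ)..L, ((q x)^2 + (deriv q x)^2 + (deriv (deriv q) x)^2))
        = Q0 + Q1 + Q2 := by
    rw [intervalIntegral.integral_add (by apply hint; fun_prop) (by apply hint; fun_prop),
      intervalIntegral.integral_add (by apply hint; fun_prop) (by apply hint; fun_prop),
      hQ0_def, hQ1_def, hQ2_def]
  have hgoal2 :
      (∫ x in (0:ℝ)..L, ((m x)^2 + (deriv m x)^2)) = M0 + M1 := by
    rw [intervalIntegral.integral_add (by apply hint; fun_prop) (by apply hint; fun_prop),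
      hM0_def, hM1_def]
  rw [hgoal1, hgoal2, ← hN0_def]
  calc Real.sqrt (Q0 + Q1 + Q2) ≤ Real.sqrt (K * T) := Real.sqrt_le_sqrt hS
    _ = Real.sqrt K * Real.sqrt T := Real.sqrt_mul hK.le _
    _ ≤ Real.sqrt K * (Real.sqrt (M0 + M1) + Real.sqrt N0) := by
        apply mul_le_mul_of_nonneg_left _ (Real.sqrt_nonneg K)
        rw [hT_def]
        exact sqrt_add_le' _ _ (by linarith) hN0
    _ = Real.sqrt K * Real.sqrt (M0 + M1) + Real.sqrt K * Real.sqrt N0 := by ring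
end

section
/- Let L > 0, d > 0, P > 0 and h_L > 0. Let m : [0,L] → ℝ be continuously differentiable with m(0) = 0 and let n : [0,L] → ℝ be continuous. Then there exist a twice continuously differentiable function q : [0,L] → ℝ and a real number θ with |θ| ≤ 1 and θ·((1 + d)·q(L) − m(L)) = |(1 + d)·q(L) − m(L)| such that −q''(x) + (1 + 2d + d²)·q(x) = n(x) + (1 + 2d)·m(x) for all x ∈ [0,L], q(0) = 0, and q'(L) = −h_L·P·θ. Moreover q is unique: if (q₁, θ₁) and (q₂, θ₂) are two such pairs, then q₁ = q₂. -/
open Real Set intervalIntegral MeasureTheory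

private lemma ftcDeriv {g : ℝ → ℝ} (hg : Continuous g) (x : ℝ) :
    HasDerivAt (fun y => ∫ t in (0:ℝ)..y, g t) (g x) x :=
  intervalIntegral.integral_hasDerivAt_right (hg.intervalIntegrable _ _)
    hg.aestronglyMeasurable.stronglyMeasurableAtFilter hg.continuousAt

private lemma hasDerivAt_sinh_c (k x : ℝ) :
    HasDerivAt (fun y => Real.sinh (k * y)) (k * Real.cosh (k * x)) x := by
  simpa [mul_comm, Function.comp_def] using (Real.hasDerivAt_sinh (k*x)).comp x ((hasDerivAt_id x).const_mul k)

private lemma hasDerivAt_cosh_c (k x : ℝ) :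
    HasDerivAt (fun y => Real.cosh (k * y)) (k * Real.sinh (k * x)) x := by
  simpa [mul_comm, Function.comp_def] using (Real.hasDerivAt_cosh (k*x)).comp x ((hasDerivAt_id x).const_mul k)

private lemma exists_linear_sol (k Lv : ℝ) (hk : 0 < k) (f : ℝ → ℝ) (hf : Continuous f) :
    ∃ B C : ℝ, ∀ A : ℝ, ∃ q : ℝ → ℝ, ContDiff ℝ 2 q ∧ q 0 = 0 ∧
      (∀ x, deriv (deriv q) x = k^2 * q x - f x) ∧
      q Lv = B + A * Real.sinh (k * Lv) ∧
      deriv q Lv = C + A * (k * Real.cosh (k * Lv)) := by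
  set g : ℝ → ℝ := fun t => -(f t) / k with hgdef
  have hg : Continuous g := (hf.neg).div_const k
  have hg1 : Continuous (fun t => Real.cosh (k*t) * g t) :=
    (Real.continuous_cosh.comp (continuous_const.mul continuous_id)).mul hg
  have hg2 : Continuous (fun t => Real.sinh (k*t) * g t) :=
    (Real.continuous_sinh.comp (continuous_const.mul continuous_id)).mul hg
  set F₁ : ℝ → ℝ := fun y => ∫ t in (0:ℝ)..y, Real.cosh (k*t) * g t with hF1
  set F₂ : ℝ → ℝ := fun y => ∫ t in (0:ℝ)..y, Real.sinh (k*t) * g t with hF2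
  have hF1d : ∀ x, HasDerivAt F₁ (Real.cosh (k*x) * g x) x := fun x => ftcDeriv hg1 x
  have hF2d : ∀ x, HasDerivAt F₂ (Real.sinh (k*x) * g x) x := fun x => ftcDeriv hg2 x
  refine ⟨Real.sinh (k*Lv) * F₁ Lv - Real.cosh (k*Lv) * F₂ Lv,
    k * (Real.cosh (k*Lv) * F₁ Lv - Real.sinh (k*Lv) * F₂ Lv), fun A => ?_⟩
  set q : ℝ → ℝ := fun x =>
    Real.sinh (k*x) * F₁ x - Real.cosh (k*x) * F₂ x + A * Real.sinh (k*x) with hqdef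
  set q' : ℝ → ℝ := fun x =>
    k * (Real.cosh (k*x) * F₁ x - Real.sinh (k*x) * F₂ x) + A * (k * Real.cosh (k*x)) with hq'def
  have hqd : ∀ x, HasDerivAt q (q' x) x := by
    intro x
    have h1 := ((hasDerivAt_sinh_c k x).mul (hF1d x)).sub
      ((hasDerivAt_cosh_c k x).mul (hF2d x))
    have h2 := (hasDerivAt_sinh_c k x).const_mul A
    refine (h1.add h2).congr_deriv ?_
    simp only [hq'def]; ring
  have hderivq : deriv q = q' := funext fun x => (hqd x).deriv
  have hq'd : ∀ x, HasDerivAt q' (k^2 * q x - f x) x := by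
    intro x
    have h1 := (((hasDerivAt_cosh_c k x).mul (hF1d x)).sub
      ((hasDerivAt_sinh_c k x).mul (hF2d x))).const_mul k
    have h2 := ((hasDerivAt_cosh_c k x).const_mul k).const_mul A
    have hid := Real.cosh_sq_sub_sinh_sq (k*x)
    have hkg : k * g x = -(f x) := by rw [hgdef]; field_simp
    refine (h1.add h2).congr_deriv ?_
    simp only [hqdef]
    have hkk : k * k⁻¹ = 1 := mul_inv_cancel₀ hk.ne'
    linear_combination (-(k * g x)) * hid - hkg - 2 * f x * k * k⁻¹ * hid - 2 * f x * hkk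
  have hderivq' : deriv q' = fun x => k^2 * q x - f x := funext fun x => (hq'd x).deriv
  have hdq : Differentiable ℝ q := fun x => (hqd x).differentiableAt
  have hdq' : Differentiable ℝ q' := fun x => (hq'd x).differentiableAt
  refine ⟨q, ?_, ?_, ?_, ?_, ?_⟩
  · rw [show (2 : WithTop ℕ∞) = 1 + 1 from rfl, contDiff_succ_iff_deriv]
    refine ⟨hdq, by simp, ?_⟩
    rw [hderivq]
    refine contDiff_one_iff_deriv.mpr ⟨hdq', ?_⟩
    rw [hderivq']
    exact (continuous_const.mul hdq.continuous).sub hf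
  · simp [hqdef, hF1, hF2]
  · intro x
    rw [hderivq, hderivq']
  · rfl
  · rw [hderivq]

private lemma sign_mono_s16 {θ1 θ2 s1 s2 : ℝ} (h1 : |θ1| ≤ 1) (h2 : |θ2| ≤ 1)
    (e1 : θ1 * s1 = |s1|) (e2 : θ2 * s2 = |s2|) : 0 ≤ (θ1 - θ2) * (s1 - s2) := by
  have b1 : θ1 * s2 ≤ |s2| := by
    calc θ1 * s2 ≤ |θ1 * s2| := le_abs_self _
    _ = |θ1| * |s2| := abs_mul _ _
    _ ≤ 1 * |s2| := mul_le_mul_of_nonneg_right h1 (abs_nonneg _)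
    _ = |s2| := one_mul _
  have b2 : θ2 * s1 ≤ |s1| := by
    calc θ2 * s1 ≤ |θ2 * s1| := le_abs_self _
    _ = |θ2| * |s1| := abs_mul _ _
    _ ≤ 1 * |s1| := mul_le_mul_of_nonneg_right h2 (abs_nonneg _)
    _ = |s1| := one_mul _
  nlinarith [b1, b2, e1, e2]



/-- solvability (and uniqueness of `q`) of the resolvent boundary value
problem for the Dirichlet–Neumann closed-loop operator, where `θ` is a selection of
the multivalued sign of `(1+d)q(L) − m(L)`. -/
theorem resolvent_dirichlet_neumann
    (L d P hL_ : ℝ) (hL : 0 < L) (hd : 0 < d) (hP : 0 < P) (hh : 0 < hL_)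
    (m n : ℝ → ℝ) (hm : ContDiff ℝ 1 m) (hm0 : m 0 = 0) (hn : Continuous n) :
    (∃ q : ℝ → ℝ, ∃ θ : ℝ, ContDiff ℝ 2 q ∧ |θ| ≤ 1
      ∧ θ * ((1 + d) * q L - m L) = |(1 + d) * q L - m L|
      ∧ (∀ x ∈ Set.Icc (0:ℝ) L,
          -(deriv (deriv q) x) + (1 + 2 * d + d^2) * q x
            = n x + (1 + 2 * d) * m x)
      ∧ q 0 = 0
      ∧ deriv q L = -(hL_ * P) * θ)
    ∧ (∀ q1 q2 : ℝ → ℝ, ∀ θ1 θ2 : ℝ,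
        (ContDiff ℝ 2 q1 ∧ |θ1| ≤ 1
          ∧ θ1 * ((1 + d) * q1 L - m L) = |(1 + d) * q1 L - m L|
          ∧ (∀ x ∈ Set.Icc (0:ℝ) L,
              -(deriv (deriv q1) x) + (1 + 2 * d + d^2) * q1 x
                = n x + (1 + 2 * d) * m x)
          ∧ q1 0 = 0
          ∧ deriv q1 L = -(hL_ * P) * θ1) →
        (ContDiff ℝ 2 q2 ∧ |θ2| ≤ 1
          ∧ θ2 * ((1 + d) * q2 L - m L) = |(1 + d) * q2 L - m L|
          ∧ (∀ x ∈ Set.Icc (0:ℝ) L,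
              -(deriv (deriv q2) x) + (1 + 2 * d + d^2) * q2 x
                = n x + (1 + 2 * d) * m x)
          ∧ q2 0 = 0
          ∧ deriv q2 L = -(hL_ * P) * θ2) →
        ∀ x ∈ Set.Icc (0:ℝ) L, q1 x = q2 x) := by
  set k : ℝ := 1 + d with hkdef
  have hk : 0 < k := by rw [hkdef]; linarith
  set f : ℝ → ℝ := fun x => n x + (1 + 2*d) * m x with hfdef
  have hf : Continuous f := hn.add (continuous_const.mul hm.continuous)
  have hkL : 0 < k * L := mul_pos hk hL
  have hsinh : 0 < Real.sinh (k*L) := Real.sinh_pos_iff.mpr hkL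
  have hcosh : 0 < Real.cosh (k*L) := Real.cosh_pos _
  have hkc : k * Real.cosh (k*L) ≠ 0 := by positivity
  have hks : k * Real.sinh (k*L) ≠ 0 := by positivity
  set p : ℝ := hL_ * P with hpdef
  clear_value p
  have hp : 0 < p := hpdef ▸ mul_pos hh hP
  have hk2 : (1 : ℝ) + 2*d + d^2 = k^2 := by rw [hkdef]; ring
  clear_value k f
  constructor
  · -- EXISTENCE
    obtain ⟨B, C, hsol⟩ := exists_linear_sol k L hk f hf
    set A₀ : ℝ := (m L - k * B) / (k * Real.sinh (k*L)) with hA0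
    set C₀ : ℝ := C + A₀ * (k * Real.cosh (k*L)) with hC0
    set θ : ℝ := -(max (-1) (min 1 (C₀ / p))) with hθ
    set A : ℝ := (-(p * θ) - C) / (k * Real.cosh (k*L)) with hA
    clear_value A₀ C₀ θ A
    obtain ⟨q, hq2, hq0, hode, hqL, hq'L⟩ := hsol A
    have ht1 : max (-1) (min 1 (C₀/p)) ≤ 1 := max_le (by norm_num) (min_le_left _ _)
    have ht2 : (-1:ℝ) ≤ max (-1) (min 1 (C₀/p)) := le_max_left _ _
    have hAkc : A * (k * Real.cosh (k*L)) = -(p * θ) - C := by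
      rw [hA]; field_simp
    have hA0ks : A₀ * (k * Real.sinh (k*L)) = m L - k * B := by
      rw [hA0]; field_simp
    have hA0kc : A₀ * (k * Real.cosh (k*L)) = C₀ - C := by rw [hC0]; ring
    have hs : k * q L - m L = (k * Real.sinh (k*L)) * (A - A₀) := by
      rw [hqL]
      linear_combination hA0ks
    refine ⟨q, θ, hq2, ?_, ?_, ?_, hq0, ?_⟩
    · rw [hθ, abs_le]; constructor <;> [linarith; linarith]
    · -- sign condition
      rcases lt_or_ge p C₀ with h1 | h1
      · -- C₀ > p : θ = -1
        have hmin : min 1 (C₀/p) = 1 := min_eq_left ((one_le_div hp).mpr h1.le)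
        have hθval : θ = -1 := by rw [hθ, hmin]; norm_num
        have hAA : (A - A₀) * (k * Real.cosh (k*L)) = p - C₀ := by
          rw [hθval] at hAkc; linear_combination hAkc - hA0kc
        have hAAneg : A - A₀ < 0 := by
          rcases lt_trichotomy (A - A₀) 0 with h | h | h
          · exact h
          · exfalso; rw [h] at hAA; simp at hAA; linarith
          · exfalso; have := mul_pos h (mul_pos hk hcosh); linarith
        have hsneg : k * q L - m L < 0 := by
          rw [hs]; exact mul_neg_of_pos_of_neg (mul_pos hk hsinh) hAAneg
        rw [abs_of_neg hsneg, hθval]; ring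
      rcases lt_or_ge C₀ (-p) with h2 | h2
      · -- C₀ < -p : θ = 1
        have hr : C₀/p < -1 := by rw [div_lt_iff₀ hp]; linarith
        have hmin : min 1 (C₀/p) = C₀/p := min_eq_right (by linarith)
        have hmax : max (-1) (C₀/p) = -1 := max_eq_left (by linarith)
        have hθval : θ = 1 := by rw [hθ, hmin, hmax]; norm_num
        have hAA : (A - A₀) * (k * Real.cosh (k*L)) = -p - C₀ := by
          rw [hθval] at hAkc; linear_combination hAkc - hA0kc
        have hAApos : 0 < A - A₀ := by
          rcases lt_trichotomy (A - A₀) 0 with h | h | h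
          · exfalso; have := mul_neg_of_neg_of_pos h (mul_pos hk hcosh); linarith
          · exfalso; rw [h] at hAA; simp at hAA; linarith
          · exact h
        have hspos : 0 < k * q L - m L := by
          rw [hs]; exact mul_pos (mul_pos hk hsinh) hAApos
        rw [abs_of_pos hspos, hθval]; ring
      · -- |C₀| ≤ p : θ = -C₀/p, s = 0
        have hr1 : C₀/p ≤ 1 := (div_le_one hp).mpr h1
        have hr2 : (-1:ℝ) ≤ C₀/p := by rw [le_div_iff₀ hp]; linarith
        have hmin : min 1 (C₀/p) = C₀/p := min_eq_right hr1
        have hmax : max (-1) (C₀/p) = C₀/p := max_eq_right hr2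
        have hθval : θ = -(C₀/p) := by rw [hθ, hmin, hmax]
        have hpθ : -(p * θ) = C₀ := by rw [hθval]; field_simp
        have hAA : (A - A₀) * (k * Real.cosh (k*L)) = 0 := by
          rw [hpθ] at hAkc; linear_combination hAkc - hA0kc
        have hAeq : A = A₀ := by
          rcases mul_eq_zero.mp hAA with h | h
          · linarith [sub_eq_zero.mp h]
          · exact absurd h hkc
        have hs0 : k * q L - m L = 0 := by rw [hs, hAeq]; ring
        rw [hs0]; simp
    · -- ODE
      intro x hx
      rw [hode x]
      simp only [hfdef]
      linear_combination (q x) * hk2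
    · -- boundary
      rw [hq'L]
      linear_combination hAkc
  · -- UNIQUENESS
    rintro q1 q2 θ1 θ2 ⟨hc1, hθ1, hs1, hode1, h10, h1L⟩ ⟨hc2, hθ2, hs2, hode2, h20, h2L⟩ x hx
    have hd1 : Differentiable ℝ q1 := hc1.differentiable (by norm_num)
    have hd2 : Differentiable ℝ q2 := hc2.differentiable (by norm_num)
    have hdd1 : Differentiable ℝ (deriv q1) := by
      rw [show (2 : WithTop ℕ∞) = 1 + 1 from rfl, contDiff_succ_iff_deriv] at hc1
      exact hc1.2.2.differentiable (by norm_num)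
    have hdd2 : Differentiable ℝ (deriv q2) := by
      rw [show (2 : WithTop ℕ∞) = 1 + 1 from rfl, contDiff_succ_iff_deriv] at hc2
      exact hc2.2.2.differentiable (by norm_num)
    have hode1' : ∀ y ∈ Set.Icc (0:ℝ) L, deriv (deriv q1) y = k^2 * q1 y - f y := by
      intro y hy
      have h := hode1 y hy
      rw [hk2] at h
      simp only [hfdef]
      linarith
    have hode2' : ∀ y ∈ Set.Icc (0:ℝ) L, deriv (deriv q2) y = k^2 * q2 y - f y := by
      intro y hy
      have h := hode2 y hy
      rw [hk2] at h
      simp only [hfdef]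
      linarith
    set c : ℝ := deriv q1 0 - deriv q2 0 with hcdef
    clear_value c
    set u : ℝ → ℝ := fun y => Real.exp (-(k*y)) *
      ((deriv q1 y - deriv q2 y) + k*(q1 y - q2 y)) with hu
    set v : ℝ → ℝ := fun y => Real.exp (k*y) *
      ((deriv q1 y - deriv q2 y) - k*(q1 y - q2 y)) with hv
    have hucont : Continuous u := by
      apply Continuous.mul
      · exact Real.continuous_exp.comp (continuous_const.mul continuous_id).neg
      · exact (hdd1.continuous.sub hdd2.continuous).add
          (continuous_const.mul (hd1.continuous.sub hd2.continuous))
    have hvcont : Continuous v := by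
      apply Continuous.mul
      · exact Real.continuous_exp.comp (continuous_const.mul continuous_id)
      · exact (hdd1.continuous.sub hdd2.continuous).sub
          (continuous_const.mul (hd1.continuous.sub hd2.continuous))
    have huderiv : ∀ y ∈ Set.Icc (0:ℝ) L, HasDerivAt u 0 y := by
      intro y hy
      have e1 : HasDerivAt (fun z => Real.exp (-(k*z))) (-k * Real.exp (-(k*y))) y := by
        have := (Real.hasDerivAt_exp (-(k*y))).comp y
          (((hasDerivAt_id y).const_mul k).neg)
        simpa [mul_comm, Function.comp_def] using this
      have e2 : HasDerivAt (fun z => (deriv q1 z - deriv q2 z) + k*(q1 z - q2 z))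
          ((deriv (deriv q1) y - deriv (deriv q2) y) + k*(deriv q1 y - deriv q2 y)) y :=
        ((hdd1 y).hasDerivAt.sub (hdd2 y).hasDerivAt).add
          (((hd1 y).hasDerivAt.sub (hd2 y).hasDerivAt).const_mul k)
      have h := e1.mul e2
      refine h.congr_deriv ?_
      rw [hode1' y hy, hode2' y hy]
      ring
    have hvderiv : ∀ y ∈ Set.Icc (0:ℝ) L, HasDerivAt v 0 y := by
      intro y hy
      have e1 : HasDerivAt (fun z => Real.exp (k*z)) (k * Real.exp (k*y)) y := by
        have h0 := (Real.hasDerivAt_exp (k*y)).comp y ((hasDerivAt_id y).const_mul k)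
        refine h0.congr_deriv ?_
        ring
      have e2 : HasDerivAt (fun z => (deriv q1 z - deriv q2 z) - k*(q1 z - q2 z))
          ((deriv (deriv q1) y - deriv (deriv q2) y) - k*(deriv q1 y - deriv q2 y)) y :=
        ((hdd1 y).hasDerivAt.sub (hdd2 y).hasDerivAt).sub
          (((hd1 y).hasDerivAt.sub (hd2 y).hasDerivAt).const_mul k)
      have h := e1.mul e2
      refine h.congr_deriv ?_
      rw [hode1' y hy, hode2' y hy]
      ring
    have hueq : ∀ y ∈ Set.Icc (0:ℝ) L, u y = u 0 :=
      constant_of_has_deriv_right_zero hucont.continuousOn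
        (fun y hy => ((huderiv y (Set.Ico_subset_Icc_self hy)).hasDerivWithinAt))
    have hveq : ∀ y ∈ Set.Icc (0:ℝ) L, v y = v 0 :=
      constant_of_has_deriv_right_zero hvcont.continuousOn
        (fun y hy => ((hvderiv y (Set.Ico_subset_Icc_self hy)).hasDerivWithinAt))
    have hu0 : u 0 = c := by simp [hu, h10, h20, hcdef]
    have hv0 : v 0 = c := by simp [hv, h10, h20, hcdef]
    have key : ∀ y ∈ Set.Icc (0:ℝ) L,
        (deriv q1 y - deriv q2 y) + k*(q1 y - q2 y) = c * Real.exp (k*y) ∧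
        (deriv q1 y - deriv q2 y) - k*(q1 y - q2 y) = c * Real.exp (-(k*y)) := by
      intro y hy
      have h1 := (hueq y hy).trans hu0
      have h2 := (hveq y hy).trans hv0
      constructor
      · simp only [hu] at h1
        rw [Real.exp_neg] at h1
        have hne : Real.exp (k*y) ≠ 0 := (Real.exp_pos _).ne'
        field_simp at h1
        linarith
      · simp only [hv] at h2
        have hne : Real.exp (k*y) ≠ 0 := (Real.exp_pos _).ne'
        rw [Real.exp_neg]
        field_simp
        linarith
    obtain ⟨kL1, kL2⟩ := key L ⟨le_of_lt hL, le_rfl⟩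
    have hE : Real.exp (-(k*L)) < Real.exp (k*L) := Real.exp_lt_exp.mpr (by linarith)
    have hsum : (0:ℝ) < Real.exp (k*L) + Real.exp (-(k*L)) := by positivity
    have hdiff : (0:ℝ) < Real.exp (k*L) - Real.exp (-(k*L)) := by linarith
    have hWL : 2*(k*(q1 L - q2 L)) = c*(Real.exp (k*L) - Real.exp (-(k*L))) := by
      linarith [kL1, kL2]
    have h3 : c*(Real.exp (k*L) + Real.exp (-(k*L))) = -2*p*(θ1-θ2) := by
      linear_combination (-1 : ℝ) * kL1 - kL2 + 2*h1L - 2*h2L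
    have mono := sign_mono_s16 hθ1 hθ2 hs1 hs2
    have mono' : 0 ≤ (θ1-θ2)*(k*(q1 L - q2 L)) := by linarith [mono]
    have e4 : 4*(p*((θ1-θ2)*(k*(q1 L - q2 L))))
        = -(c^2*(Real.exp (k*L) + Real.exp (-(k*L)))*(Real.exp (k*L) - Real.exp (-(k*L)))) := by
      linear_combination (2*(k*(q1 L - q2 L))) * h3 - (c*(Real.exp (k*L) + Real.exp (-(k*L)))) * hWL
    have hcc : c^2*(Real.exp (k*L) + Real.exp (-(k*L)))*(Real.exp (k*L) - Real.exp (-(k*L))) ≤ 0 := by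
      linarith [mul_nonneg hp.le mono', e4]
    have hc2 : c^2 ≤ 0 := by nlinarith [hcc, mul_pos hsum hdiff]
    have hc0 : c = 0 := by
      have : c^2 = 0 := le_antisymm hc2 (sq_nonneg c)
      exact pow_eq_zero_iff two_ne_zero |>.mp this
    obtain ⟨kx1, kx2⟩ := key x hx
    rw [hc0] at kx1 kx2
    have h5 : k * (q1 x - q2 x) = 0 := by
      simp only [zero_mul] at kx1 kx2
      linarith
    rcases mul_eq_zero.mp h5 with h | h
    · exact absurd h hk.ne'
    · linarith [sub_eq_zero.mp h]
end

section
/- Let L > 0, d > 0, P > 0, h_L > 0 and σ > 0. Let m : [0,L] → ℝ be continuously differentiable and n : [0,L] → ℝ be continuous. For twice continuously differentiable q : [0,L] → ℝ with q(0) = 0 define J(q) = (1/2)∫₀ᴸ [q''(x)² + (1 + 2d + d²)·q'(x)² + 2·q''(x)·(n(x) + (1 + 2d)·m(x))] dx + (1 + d)·[−m(L)·q'(L) + d·h_L·P·φ_σ(q'(L))]. Then there exist constants C₁ > 0, depending only on L, and C₂ ≥ 0, depending only on L, d, P, h_L, m and n, such that J(q) ≥ C₁·‖q‖²_{H²} −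 C₂·‖q‖_{H²} for every such q, where ‖q‖²_{H²} = ∫₀ᴸ (q² + q'² + q''²) dx. -/
open intervalIntegral MeasureTheory

/-- L¹–L² bound on `[0,L]`: `∫ |f| ≤ √L √(∫ f²)`. -/
lemma int_abs_le_sqrt (L : ℝ) (hL : 0 < L) (f : ℝ → ℝ) (hf : Continuous f) :
    ∫ x in (0:ℝ)..L, |f x| ≤ Real.sqrt L * Real.sqrt (∫ x in (0:ℝ)..L, (f x)^2) := by
  set I := ∫ x in (0:ℝ)..L, |f x| with hI
  set S := ∫ x in (0:ℝ)..L, (f x)^2 with hS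
  have hS0 : 0 ≤ S := intervalIntegral.integral_nonneg hL.le (fun x _ => sq_nonneg _)
  have key : ∀ t : ℝ, 0 < t → I ≤ L * t / 2 + S / (2 * t) := by
    intro t ht
    have h1 : I ≤ ∫ x in (0:ℝ)..L, (t / 2 + (f x)^2 / (2 * t)) := by
      apply intervalIntegral.integral_mono_on hL.le
      · exact (hf.abs).intervalIntegrable _ _
      · exact (continuous_const.add ((hf.pow 2).div_const _)).intervalIntegrable _ _
      · intro x _
        rw [← sq_abs (f x), ← sub_nonneg]
        have he : t / 2 + |f x| ^ 2 / (2 * t) - |f x| = (|f x| - t)^2 / (2 * t) := by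
          field_simp; nlinarith [sq_abs (f x)]
        rw [he]; positivity
    have h2 : (∫ x in (0:ℝ)..L, (t / 2 + (f x)^2 / (2 * t)))
        = L * t / 2 + S / (2 * t) := by
      rw [intervalIntegral.integral_add (g := fun x => (f x)^2 / (2 * t)) (intervalIntegrable_const)
        (((hf.pow 2).div_const _).intervalIntegrable _ _)]
      simp only [intervalIntegral.integral_const, intervalIntegral.integral_div, smul_eq_mul,
        sub_zero, ← hS]

    linarith [h1, h2.le]
  rcases eq_or_lt_of_le hS0 with h0 | hSpos
  · have hI0 : I ≤ 0 := by
      by_contra h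
      push_neg at h
      have hk := key (I / L) (by positivity)
      rw [← h0] at hk
      have hL' : L * (I / L) = I := by field_simp
      rw [hL'] at hk
      simp only [zero_div] at hk
      linarith
    calc I ≤ 0 := hI0
      _ ≤ _ := by positivity
  · have ht : (0:ℝ) < Real.sqrt (S / L) := Real.sqrt_pos.mpr (by positivity)
    have hk := key _ ht
    have hrL : Real.sqrt L ^ 2 = L := Real.sq_sqrt hL.le
    have hrS : Real.sqrt S ^ 2 = S := Real.sq_sqrt hS0
    have hrLpos : 0 < Real.sqrt L := Real.sqrt_pos.mpr hL
    have hrSpos : 0 < Real.sqrt S := Real.sqrt_pos.mpr hSpos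
    have hsplit : Real.sqrt (S / L) = Real.sqrt S / Real.sqrt L := Real.sqrt_div hS0 L
    rw [hsplit] at hk
    have : L * (Real.sqrt S / Real.sqrt L) / 2 + S / (2 * (Real.sqrt S / Real.sqrt L))
        = Real.sqrt L * Real.sqrt S := by
      field_simp
      nlinarith [hrL, hrS]
    linarith [hk, this.le]

lemma moreauAbs_nonneg'' (σ x : ℝ) (hσ : 0 < σ) :
    0 ≤ (if |x| ≤ σ then x^2 / (2 * σ) else |x| - σ / 2) := by
  split_ifs with h
  · positivity
  · push_neg at h; linarith [abs_nonneg x]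

noncomputable def moreauAbs (σ x : ℝ) : ℝ := if |x| ≤ σ then x^2 / (2 * σ) else |x| - σ / 2

/-- coercivity lower bound `J(q) ≥ C₁‖q‖²_{H²} − C₂‖q‖_{H²}` for the
convex functional of the Yosida-regularized resolvent problem in the
Dirichlet–Dirichlet case; `C₁` depends only on `L` and `C₂` only on
`L, d, P, h_L, m, n`. -/
theorem functional_coercivity_bound
    (L : ℝ) (hL : 0 < L) :
    ∃ C₁ : ℝ, 0 < C₁ ∧
      ∀ d P hL_ : ℝ, 0 < d → 0 < P → 0 < hL_ →
      ∀ m n : ℝ → ℝ, ContDiff ℝ 1 m → Continuous n →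
      ∃ C₂ : ℝ, 0 ≤ C₂ ∧
        ∀ σ : ℝ, 0 < σ →
        ∀ q : ℝ → ℝ, ContDiff ℝ 2 q → q 0 = 0 →
          (1/2) * (∫ x in (0:ℝ)..L,
              ((deriv (deriv q) x)^2 + (1 + 2 * d + d^2) * (deriv q x)^2
                + 2 * deriv (deriv q) x * (n x + (1 + 2 * d) * m x)))
            + (1 + d) * (-(m L) * deriv q L + d * hL_ * P * moreauAbs σ (deriv q L))
          ≥ C₁ * (∫ x in (0:ℝ)..L,
                ((q x)^2 + (deriv q x)^2 + (deriv (deriv q) x)^2))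
            - C₂ * Real.sqrt (∫ x in (0:ℝ)..L,
                ((q x)^2 + (deriv q x)^2 + (deriv (deriv q) x)^2)) := by
  have hrL : Real.sqrt L ^ 2 = L := Real.sq_sqrt hL.le
  have hrLpos : 0 < Real.sqrt L := Real.sqrt_pos.mpr hL
  refine ⟨1 / (2 * (1 + L^2)), by positivity, ?_⟩
  intro d P hL_ hd hP hhL m n hm hn
  set g : ℝ → ℝ := fun x => n x + (1 + 2 * d) * m x with hgdef
  have hgc : Continuous g := hn.add (continuous_const.mul hm.continuous)
  obtain ⟨Mg, hMg⟩ := (isCompact_Icc (a := (0:ℝ)) (b := L)).exists_bound_of_continuousOn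
    hgc.continuousOn
  set Mg' := max Mg 0 with hMg'def
  have hMg'0 : 0 ≤ Mg' := le_max_right _ _
  have hMg' : ∀ x ∈ Set.Icc (0:ℝ) L, |g x| ≤ Mg' := fun x hx =>
    le_trans (by simpa [Real.norm_eq_abs] using hMg x hx) (le_max_left _ _)
  refine ⟨Mg' * Real.sqrt L + (1 + d) * |m L| * (1 / Real.sqrt L + Real.sqrt L),
    by positivity, ?_⟩
  intro σ hσ q hq hq0
  -- smoothness of derivatives
  have hq2 : ContDiff ℝ ((1:ℕ∞) + 1) q := by exact_mod_cast hq
  obtain ⟨hqd, -, hq1⟩ := contDiff_succ_iff_deriv.mp hq2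
  have hq1' : ContDiff ℝ ((0:ℕ∞) + 1) (deriv q) := by exact_mod_cast hq1
  obtain ⟨hqd', -, -⟩ := contDiff_succ_iff_deriv.mp hq1'
  have hcq : Continuous q := hq.continuous
  have hcq' : Continuous (deriv q) := hq1.continuous
  have hcq'' : Continuous (deriv (deriv q)) := hq1.continuous_deriv le_rfl
  -- basic integrals
  set A := ∫ x in (0:ℝ)..L, (deriv (deriv q) x)^2 with hAdef
  set B := ∫ x in (0:ℝ)..L, (deriv q x)^2 with hBdef
  set Q := ∫ x in (0:ℝ)..L, (q x)^2 with hQdef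
  have hA0 : 0 ≤ A := intervalIntegral.integral_nonneg hL.le (fun x _ => sq_nonneg _)
  have hB0 : 0 ≤ B := intervalIntegral.integral_nonneg hL.le (fun x _ => sq_nonneg _)
  have hQ0 : 0 ≤ Q := intervalIntegral.integral_nonneg hL.le (fun x _ => sq_nonneg _)
  have hiQ : IntervalIntegrable (fun x => (q x)^2) volume 0 L :=
    (hcq.pow 2).intervalIntegrable _ _
  have hiB : IntervalIntegrable (fun x => (deriv q x)^2) volume 0 L :=
    (hcq'.pow 2).intervalIntegrable _ _
  have hiA : IntervalIntegrable (fun x => (deriv (deriv q) x)^2) volume 0 L :=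
    (hcq''.pow 2).intervalIntegrable _ _
  -- the H² norm squared splits
  have hSsplit : (∫ x in (0:ℝ)..L, ((q x)^2 + (deriv q x)^2 + (deriv (deriv q) x)^2))
      = Q + B + A := by
    rw [intervalIntegral.integral_add (hiQ.add hiB) hiA, intervalIntegral.integral_add hiQ hiB]
  set S := Q + B + A with hSdef
  have hS0 : 0 ≤ S := by positivity
  set N := Real.sqrt S with hNdef
  have hN0 : 0 ≤ N := Real.sqrt_nonneg _
  have hNA : Real.sqrt A ≤ N := Real.sqrt_le_sqrt (by linarith)
  have hNB : Real.sqrt B ≤ N := Real.sqrt_le_sqrt (by linarith)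
  set I' := ∫ x in (0:ℝ)..L, |deriv q x| with hI'def
  set K := ∫ x in (0:ℝ)..L, |deriv (deriv q) x| with hKdef
  have hI'2 : I' ≤ Real.sqrt L * Real.sqrt B := int_abs_le_sqrt L hL _ hcq'
  have hK2 : K ≤ Real.sqrt L * Real.sqrt A := int_abs_le_sqrt L hL _ hcq''
  have hI'0 : 0 ≤ I' := intervalIntegral.integral_nonneg hL.le (fun x _ => abs_nonneg _)
  have hK0 : 0 ≤ K := intervalIntegral.integral_nonneg hL.le (fun x _ => abs_nonneg _)
  -- Poincaré : every value of q is bounded by I'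
  have hqx : ∀ x ∈ Set.Icc (0:ℝ) L, |q x| ≤ I' := by
    intro x hx
    have hftc : ∫ y in (0:ℝ)..x, deriv q y = q x - q 0 :=
      intervalIntegral.integral_deriv_eq_sub (fun y _ => hqd.differentiableAt)
        (hcq'.intervalIntegrable _ _)
    rw [hq0, sub_zero] at hftc
    have h1 : |q x| ≤ ∫ y in (0:ℝ)..x, |deriv q y| := by
      rw [← hftc]; exact intervalIntegral.abs_integral_le_integral_abs hx.1
    have h2 : (∫ y in (0:ℝ)..x, |deriv q y|) ≤ I' := by
      have hadj : (∫ y in (0:ℝ)..x, |deriv q y|) + (∫ y in x..L, |deriv q y|) = I' :=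
        intervalIntegral.integral_add_adjacent_intervals
          (hcq'.abs.intervalIntegrable _ _) (hcq'.abs.intervalIntegrable _ _)
      have : 0 ≤ ∫ y in x..L, |deriv q y| :=
        intervalIntegral.integral_nonneg hx.2 (fun y _ => abs_nonneg _)
      linarith
    linarith
  have hQle : Q ≤ L * I'^2 := by
    have : Q ≤ ∫ _x in (0:ℝ)..L, I'^2 := by
      apply intervalIntegral.integral_mono_on hL.le hiQ intervalIntegrable_const
      intro x hx
      have := hqx x hx
      nlinarith [abs_nonneg (q x), sq_abs (q x)]
    simpa [intervalIntegral.integral_const, smul_eq_mul] using this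
  have hQB : Q ≤ L^2 * B := by
    have hsq : I' * I' ≤ (Real.sqrt L * Real.sqrt B) * (Real.sqrt L * Real.sqrt B) :=
      mul_self_le_mul_self hI'0 hI'2
    have hBsq : Real.sqrt B ^ 2 = B := Real.sq_sqrt hB0
    have e1 : (Real.sqrt L * Real.sqrt B) * (Real.sqrt L * Real.sqrt B) = L * B := by
      rw [show (Real.sqrt L * Real.sqrt B) * (Real.sqrt L * Real.sqrt B)
        = Real.sqrt L ^ 2 * Real.sqrt B ^ 2 by ring, hrL, hBsq]
    calc Q ≤ L * I'^2 := hQle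
      _ = L * (I' * I') := by ring
      _ ≤ L * (L * B) := mul_le_mul_of_nonneg_left (hsq.trans e1.le) hL.le
      _ = L^2 * B := by ring
  -- trace bound on deriv q L
  have htr0 : ∀ x ∈ Set.Icc (0:ℝ) L, |deriv q L| ≤ |deriv q x| + K := by
    intro x hx
    have hftc : ∫ y in x..L, deriv (deriv q) y = deriv q L - deriv q x :=
      intervalIntegral.integral_deriv_eq_sub (fun y _ => hqd'.differentiableAt)
        (hcq''.intervalIntegrable _ _)
    have h1 : |deriv q L - deriv q x| ≤ ∫ y in x..L, |deriv (deriv q) y| := by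
      rw [← hftc]; exact intervalIntegral.abs_integral_le_integral_abs hx.2
    have h2 : (∫ y in x..L, |deriv (deriv q) y|) ≤ K := by
      have hadj : (∫ y in (0:ℝ)..x, |deriv (deriv q) y|)
          + (∫ y in x..L, |deriv (deriv q) y|) = K :=
        intervalIntegral.integral_add_adjacent_intervals
          (hcq''.abs.intervalIntegrable _ _) (hcq''.abs.intervalIntegrable _ _)
      have : 0 ≤ ∫ y in (0:ℝ)..x, |deriv (deriv q) y| :=
        intervalIntegral.integral_nonneg hx.1 (fun y _ => abs_nonneg _)
      linarith
    calc |deriv q L| ≤ |deriv q x| + |deriv q L - deriv q x| := by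
          have := abs_sub_abs_le_abs_sub (deriv q L) (deriv q x); linarith [abs_abs (deriv q x)]
      _ ≤ |deriv q x| + K := by linarith
  have htr : L * |deriv q L| ≤ I' + L * K := by
    have h1 : (∫ _x in (0:ℝ)..L, |deriv q L|) ≤ ∫ x in (0:ℝ)..L, (|deriv q x| + K) := by
      apply intervalIntegral.integral_mono_on hL.le intervalIntegrable_const
        ((hcq'.abs.add continuous_const).intervalIntegrable _ _)
      exact htr0
    have h2 : (∫ _x in (0:ℝ)..L, |deriv q L|) = L * |deriv q L| := by
      simp [intervalIntegral.integral_const, smul_eq_mul]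
    have h3 : (∫ x in (0:ℝ)..L, (|deriv q x| + K)) = I' + L * K := by
      rw [intervalIntegral.integral_add (hcq'.abs.intervalIntegrable _ _)
        intervalIntegrable_const]
      simp [intervalIntegral.integral_const, smul_eq_mul]
      exact hI'def.symm
    linarith [h1, h2.ge, h3.le]
  have hKN : K ≤ Real.sqrt L * N := hK2.trans (mul_le_mul_of_nonneg_left hNA hrLpos.le)
  have hIN : I' ≤ Real.sqrt L * N := hI'2.trans (mul_le_mul_of_nonneg_left hNB hrLpos.le)
  have htrN : |deriv q L| ≤ (1 / Real.sqrt L + Real.sqrt L) * N := by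
    have h1 : L * |deriv q L| ≤ Real.sqrt L * N + L * (Real.sqrt L * N) := by
      have := mul_le_mul_of_nonneg_left hKN hL.le
      linarith [htr]
    have hLdiv : L * (1 / Real.sqrt L) = Real.sqrt L := by
      rw [mul_one_div, eq_comm, eq_div_iff hrLpos.ne', Real.mul_self_sqrt hL.le]
    have hLrw : L * ((1 / Real.sqrt L + Real.sqrt L) * N)
        = (L * (1 / Real.sqrt L)) * N + L * (Real.sqrt L * N) := by ring
    rw [hLdiv] at hLrw
    rw [← hLrw] at h1
    exact le_of_mul_le_mul_left h1 hL
  -- the cross term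
  set E := ∫ x in (0:ℝ)..L, deriv (deriv q) x * g x with hEdef
  have hEbound : |E| ≤ Mg' * K := by
    have h1 : |E| ≤ ∫ x in (0:ℝ)..L, |deriv (deriv q) x * g x| :=
      intervalIntegral.abs_integral_le_integral_abs hL.le
    have h2 : (∫ x in (0:ℝ)..L, |deriv (deriv q) x * g x|)
        ≤ ∫ x in (0:ℝ)..L, Mg' * |deriv (deriv q) x| := by
      apply intervalIntegral.integral_mono_on hL.le
        ((hcq''.mul hgc).abs.intervalIntegrable _ _)
        ((continuous_const.mul hcq''.abs).intervalIntegrable _ _)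
      intro x hx
      show |deriv (deriv q) x * g x| ≤ Mg' * |deriv (deriv q) x|
      rw [abs_mul, mul_comm Mg' _]
      exact mul_le_mul_of_nonneg_left (hMg' x hx) (abs_nonneg _)
    have h3 : (∫ x in (0:ℝ)..L, Mg' * |deriv (deriv q) x|) = Mg' * K :=
      intervalIntegral.integral_const_mul _ _
    linarith [h1, h2, h3.le]
  -- split the main integral
  have hJsplit : (∫ x in (0:ℝ)..L,
      ((deriv (deriv q) x)^2 + (1 + 2 * d + d^2) * (deriv q x)^2
        + 2 * deriv (deriv q) x * (n x + (1 + 2 * d) * m x)))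
      = A + (1 + 2 * d + d^2) * B + 2 * E := by
    have hi2 : IntervalIntegrable (fun x => (1 + 2 * d + d^2) * (deriv q x)^2) volume 0 L :=
      (continuous_const.mul (hcq'.pow 2)).intervalIntegrable _ _
    have hi3 : IntervalIntegrable (fun x => 2 * deriv (deriv q) x * g x) volume 0 L :=
      ((continuous_const.mul hcq'').mul hgc).intervalIntegrable _ _
    rw [show (fun x => (deriv (deriv q) x)^2 + (1 + 2 * d + d^2) * (deriv q x)^2
        + 2 * deriv (deriv q) x * (n x + (1 + 2 * d) * m x))
      = (fun x => ((deriv (deriv q) x)^2 + (1 + 2 * d + d^2) * (deriv q x)^2)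
        + 2 * deriv (deriv q) x * g x) from rfl]
    rw [intervalIntegral.integral_add (hiA.add hi2) hi3, intervalIntegral.integral_add hiA hi2,
      intervalIntegral.integral_const_mul]
    have : (∫ x in (0:ℝ)..L, 2 * deriv (deriv q) x * g x) = 2 * E := by
      simp only [mul_assoc]
      rw [intervalIntegral.integral_const_mul]
    rw [this]
  clear_value A B Q S N I' K E
  -- the Moreau term is nonnegative
  have hmor : 0 ≤ moreauAbs σ (deriv q L) := moreauAbs_nonneg'' σ _ hσ
  -- assemble
  rw [hSsplit, hJsplit, ← hNdef]
  have hAB : S ≤ (A + B) * (1 + L^2) := by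
    have h0 : 0 ≤ L^2 * A := by positivity
    have hexp : (A + B) * (1 + L^2) = A + B + L^2 * A + L^2 * B := by ring
    rw [hexp]
    linarith [hQB, hSdef.le]
  have hE : -(Mg' * Real.sqrt L * N) ≤ E := by
    have h3 : Mg' * (Real.sqrt L * N) = Mg' * Real.sqrt L * N := (mul_assoc _ _ _).symm
    have h4 : Mg' * K ≤ Mg' * (Real.sqrt L * N) := mul_le_mul_of_nonneg_left hKN hMg'0
    linarith [neg_abs_le E, hEbound, h3.le, h3.ge]
  have hbd : -((1 + d) * |m L| * ((1 / Real.sqrt L + Real.sqrt L) * N))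
      ≤ (1 + d) * (-(m L) * deriv q L) := by
    have h1 : -(|m L| * |deriv q L|) ≤ -(m L) * deriv q L := by
      have := neg_abs_le (-(m L) * deriv q L)
      rw [abs_mul, abs_neg] at this
      linarith
    have h2 : |m L| * |deriv q L| ≤ |m L| * ((1 / Real.sqrt L + Real.sqrt L) * N) :=
      mul_le_mul_of_nonneg_left htrN (abs_nonneg _)
    have h3 : -(|m L| * ((1 / Real.sqrt L + Real.sqrt L) * N)) ≤ -(m L) * deriv q L := by
      linarith
    have h4 := mul_le_mul_of_nonneg_left h3 (by linarith : (0:ℝ) ≤ 1 + d)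
    have h5 : (1 + d) * -(|m L| * ((1 / Real.sqrt L + Real.sqrt L) * N))
        = -((1 + d) * |m L| * ((1 / Real.sqrt L + Real.sqrt L) * N)) := by ring
    linarith [h4, h5.le, h5.ge]
  have hmor2 : 0 ≤ (1 + d) * (d * hL_ * P * moreauAbs σ (deriv q L)) := by positivity
  have hfin : (1/2) * (A + (1 + 2 * d + d^2) * B + 2 * E) ≥ (1/2) * (A + B) + E := by
    have h0 : 0 ≤ (2 * d + d^2) * B := by positivity
    have hexp : (1/2) * (A + (1 + 2 * d + d^2) * B + 2 * E)
        = (1/2) * (A + B) + E + (1/2) * ((2 * d + d^2) * B) := by ring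
    linarith [hexp.le, hexp.ge]
  have hC1 : (1 / (2 * (1 + L^2))) * S ≤ (1/2) * (A + B) := by
    have hpos : (0:ℝ) ≤ 1 / (2 * (1 + L^2)) := by positivity
    have h := mul_le_mul_of_nonneg_left hAB hpos
    have hexp : (1 / (2 * (1 + L^2))) * ((A + B) * (1 + L^2)) = (1/2) * (A + B) := by
      field_simp
    linarith [hexp.le, hexp.ge]
  have hexp2 : (Mg' * Real.sqrt L + (1 + d) * |m L| * (1 / Real.sqrt L + Real.sqrt L)) * N
      = Mg' * Real.sqrt L * N + (1 + d) * |m L| * ((1 / Real.sqrt L + Real.sqrt L) * N) := by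
    ring
  have hexp3 : (1 + d) * (-(m L) * deriv q L + d * hL_ * P * moreauAbs σ (deriv q L))
      = (1 + d) * (-(m L) * deriv q L)
        + (1 + d) * (d * hL_ * P * moreauAbs σ (deriv q L)) := by ring
  rw [hexp3]
  linarith [hfin, hmor2, hC1, hE, hbd, hexp2.le, hexp2.ge]
end
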